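/- Let v₁ = (i₁,j₁) and v₂ = (i₂,j₂) be vertices of the infinite hexagonal grid T_H with i₁ ≤ i₂, and let τ(i,j) = (i+j) mod 2. Then the graph distance satisfies: d(v₁,v₂) = |i₁−i₂| + |j₁−j₂| if |i₁−i₂| ≤ |j₁−j₂|, and d(v₁,v₂) = 2(i₂−i₁) + τ(v₁) − τ(v₂) if |i₁−i₂| > |j₁−j₂|. -/

import Mathlib

/-!
Every edge of `T_H` changes the level `2i - τ(i,j)` by exactly one and changes `|Δi| + |Δj|` by
at most one, so `max (|Δi| + |Δj|) |Δlevel|` is a lower bound for the distance. Conversely, from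
any vertex other than the target, one of the (at most three) available moves decreases this
quantity by one, so a greedy walk attains the bound. When `|Δi| ≤ |Δj|` the first term wins,
otherwise the second.
-/

/-- The infinite hexagonal grid `T_H` on vertex set ℤ×ℤ: `(i,j)` is adjacent to `(i,j±1)`, and
`(i,j)` is adjacent to `(i+1,j)` iff `i+j` is even. -/
def TH : SimpleGraph (ℤ × ℤ) where
  Adj u v :=
    (u.1 = v.1 ∧ (v.2 = u.2 + 1 ∨ u.2 = v.2 + 1)) ∨
    (u.2 = v.2 ∧ ((v.1 = u.1 + 1 ∧ (u.1 + u.2) % 2 = 0) ∨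
                  (u.1 = v.1 + 1 ∧ (v.1 + v.2) % 2 = 0)))
  symm := by
    constructor
    intro u v h
    omega
  loopless := by
    constructor
    intro u h
    omega

/-- An `l`-distance coloring of `T_H`. -/
def IsDistColoring (l : ℕ) (f : ℤ × ℤ → ℕ) : Prop :=
  ∀ u v : ℤ × ℤ, u ≠ v → TH.dist u v ≤ l → f u ≠ f v

/-- The six corner vertices of `F_{x,k}` for a right vertex `x`. -/
def corners (x : ℤ × ℤ) (k : ℕ) : Set (ℤ × ℤ) :=
  {(x.1, x.2 + (k : ℤ)), (x.1 + ((k+1)/2 : ℕ), x.2 + (k/2 : ℕ)),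
   (x.1 + ((k+1)/2 : ℕ), x.2 - (k/2 : ℕ)), (x.1, x.2 - (k : ℤ)),
   (x.1 - (k/2 : ℕ), x.2 - ((k+1)/2 : ℕ)), (x.1 - (k/2 : ℕ), x.2 + ((k+1)/2 : ℕ))}

/-- `S_{x,k}^{2h}`: non-corner vertices of `F_{x,k}` at distance exactly `2h`
from some corner vertex of `F_{x,k}`. -/
def Sset (x : ℤ × ℤ) (k h : ℕ) : Set (ℤ × ℤ) :=
  {v | TH.dist x v = k ∧ v ∉ corners x k ∧ ∃ u ∈ corners x k, TH.dist v u = 2 * h}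

namespace SimpleGraph

variable {V : Type*} {G : SimpleGraph V}

lemma le_add_length_of_adj_le {f : V → ℕ} (hf : ∀ x y, G.Adj x y → f x ≤ f y + 1)
    {u v : V} (p : G.Walk u v) : f u ≤ f v + p.length := by
  induction p with
  | nil => simp
  | cons hadj _ ih => have := hf _ _ hadj; rw [Walk.length_cons]; omega

lemma exists_walk_length_le_of_exists_adj_lt {f : V → ℕ} {v : V}
    (hf : ∀ x ≠ v, ∃ y, G.Adj x y ∧ f y < f x) (u : V) : ∃ p : G.Walk u v, p.length ≤ f u := by
  induction hu : f u using Nat.strong_induction_on generalizing u with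
  | _ n ih =>
    by_cases huv : u = v
    · subst huv
      exact ⟨.nil, Nat.zero_le _⟩
    obtain ⟨y, hadj, hlt⟩ := hf u huv
    obtain ⟨p, hp⟩ := ih (f y) (hu ▸ hlt) y rfl
    exact ⟨.cons hadj p, by rw [Walk.length_cons]; omega⟩

theorem dist_eq_of_adj_le_of_exists_adj_lt {f : V → ℕ} {v : V} (hv : f v = 0)
    (hle : ∀ x y, G.Adj x y → f x ≤ f y + 1) (hlt : ∀ x ≠ v, ∃ y, G.Adj x y ∧ f y < f x)
    (u : V) : G.dist u v = f u := by
  obtain ⟨p, hp⟩ := exists_walk_length_le_of_exists_adj_lt hlt u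
  obtain ⟨q, hq⟩ := Reachable.exists_walk_length_eq_dist ⟨p⟩
  have hlower := le_add_length_of_adj_le hle q
  have hupper := dist_le p
  omega

end SimpleGraph

def hexLevel (u : ℤ × ℤ) : ℤ := 2 * u.1 - (u.1 + u.2) % 2

def hexDist (u v : ℤ × ℤ) : ℕ :=
  max ((u.1 - v.1).natAbs + (u.2 - v.2).natAbs) (hexLevel u - hexLevel v).natAbs

lemma TH_adj_iff {u v : ℤ × ℤ} : TH.Adj u v ↔
    (u.1 = v.1 ∧ (v.2 = u.2 + 1 ∨ u.2 = v.2 + 1)) ∨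
    (u.2 = v.2 ∧ ((v.1 = u.1 + 1 ∧ (u.1 + u.2) % 2 = 0) ∨
                  (u.1 = v.1 + 1 ∧ (v.1 + v.2) % 2 = 0))) := Iff.rfl

lemma hexDist_le_of_TH_adj {x y : ℤ × ℤ} (h : TH.Adj x y) (v : ℤ × ℤ) :
    hexDist x v ≤ hexDist y v + 1 := by
  rw [TH_adj_iff] at h
  simp only [hexDist, hexLevel]
  omega

lemma exists_TH_adj_hexDist_lt {x v : ℤ × ℤ} (hxv : x ≠ v) :
    ∃ y, TH.Adj x y ∧ hexDist y v < hexDist x v := by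
  obtain ⟨i, j⟩ := x
  obtain ⟨i', j'⟩ := v
  have hne : i ≠ i' ∨ j ≠ j' := by
    by_contra! hc
    exact hxv (Prod.ext hc.1 hc.2)
  simp only [hexDist, hexLevel, TH_adj_iff]
  by_cases hright : i < i' ∧ (i + j) % 2 = 0
  · exact ⟨(i + 1, j), by omega, by omega⟩
  by_cases hleft : i' < i ∧ (i + j) % 2 = 1
  · exact ⟨(i - 1, j), by omega, by omega⟩
  by_cases hdown : j' < j
  · exact ⟨(i, j - 1), by omega, by omega⟩
  · exact ⟨(i, j + 1), by omega, by omega⟩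

theorem TH_dist_eq_hexDist (u v : ℤ × ℤ) : TH.dist u v = hexDist u v :=
  SimpleGraph.dist_eq_of_adj_le_of_exists_adj_lt (by simp [hexDist])
    (fun _ _ h ↦ hexDist_le_of_TH_adj h v) (fun _ h ↦ exists_TH_adj_hexDist_lt h) u

/-- Distance formula in `T_H`, where `τ(i,j) = (i+j) mod 2`. -/
theorem dist_formula (i₁ j₁ i₂ j₂ : ℤ) (h : i₁ ≤ i₂) :
    (|i₁ - i₂| ≤ |j₁ - j₂| →
      (TH.dist (i₁, j₁) (i₂, j₂) : ℤ) = |i₁ - i₂| + |j₁ - j₂|) ∧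
    (|i₁ - i₂| > |j₁ - j₂| →
      (TH.dist (i₁, j₁) (i₂, j₂) : ℤ) = 2*(i₂ - i₁) + (i₁ + j₁) % 2 - (i₂ + j₂) % 2) := by
  simp only [TH_dist_eq_hexDist, hexDist, hexLevel, Int.abs_eq_natAbs]
  omega
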